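/- arXiv:1307.4188 — 6 statements merged into one kernel-verified Lean document; each statement's English description precedes it below -/
import Mathlib

section
/- Let 0<q<1 and w∈ℂ∖{0}. For every s∈ℂ with Re(s)>0, the series 4·Σ_{n=1}^∞ n·(|w|·[n]_q)^{-s} defining the spectral zeta function ζ_D(s) of the standard Podleś sphere converges absolutely and equals 4·((1−q²)/|w|)^s · Σ_{k=0}^∞ (k+1)·q^{ks}/(1−q^{2(k+1)})^s; moreover, writing s=x+iy with x>0, one has |ζ_D(s)| ≤ 4/(|w|^x·(1−q^x)²). In particular ζ_D(s) is finite for every s with Re(s)>0. -/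
open Complex Real

/-- The q-number `[n]_q = (q^{-n} - q^n)/(q^{-1} - q)`. -/
noncomputable def qnum (q : ℝ) (n : ℕ) : ℝ :=
  (q ^ (-(n : ℤ)) - q ^ (n : ℤ)) / (q ^ (-1 : ℤ) - q)

/-! Since `[n+1]_q = (1 - q^{2(n+1)}) / (q^n (1 - q^2))`, each summand factors as
`((1 - q²)/|w|)^s · q^{ns} / (1 - q^{2(n+1)})^s`, which gives the rewritten series. For the bound,
`[n+1]_q⁻¹ ≤ q^n` dominates the modulus of the `n`-th summand by `4 |w|^{-x} (n+1) (q^x)^n`,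
and `∑ (n+1) r^n = 1/(1-r)²`. -/

theorem qnum_succ_eq {q : ℝ} (hq : q ≠ 0) (n : ℕ) :
    qnum q (n + 1) = (1 - q ^ (2 * (n + 1))) / (q ^ n * (1 - q ^ 2)) := by
  rw [qnum, zpow_neg, zpow_neg_one, zpow_natCast]
  field_simp
  ring

theorem qnum_succ_pos {q : ℝ} (hq : 0 < q) (hq1 : q < 1) (n : ℕ) : 0 < qnum q (n + 1) := by
  have hq2 : q ^ (2 * (n + 1)) < 1 := pow_lt_one₀ hq.le hq1 (by omega)
  rw [qnum_succ_eq hq.ne']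
  have : 0 < 1 - q ^ 2 := by nlinarith
  exact div_pos (by linarith) (by positivity)

theorem inv_qnum_succ_le {q : ℝ} (hq : 0 < q) (hq1 : q ≤ 1) (n : ℕ) :
    (qnum q (n + 1))⁻¹ ≤ q ^ n := by
  have hq2 : q ^ (2 * (n + 1)) ≤ q ^ 2 := pow_le_pow_of_le_one hq.le hq1 (by omega)
  rw [qnum_succ_eq hq.ne', inv_div]
  apply div_le_of_le_mul₀ (sub_nonneg.2 (pow_le_one₀ hq.le hq1)) (by positivity)
  nlinarith [pow_nonneg hq.le n]

theorem rpow_neg_mul_qnum_succ_le {c q x : ℝ} (hc : 0 ≤ c) (hq : 0 < q) (hq1 : q < 1)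
    (hx : 0 ≤ x) (n : ℕ) : (c * qnum q (n + 1)) ^ (-x) ≤ c ^ (-x) * (q ^ x) ^ n := by
  have hA : 0 ≤ c * qnum q (n + 1) := mul_nonneg hc (qnum_succ_pos hq hq1 n).le
  calc (c * qnum q (n + 1)) ^ (-x) = ((c * qnum q (n + 1))⁻¹) ^ x := by
        rw [Real.rpow_neg hA, Real.inv_rpow hA]
    _ ≤ (c⁻¹ * q ^ n) ^ x := by
        rw [mul_inv]
        gcongr
        · exact mul_nonneg (inv_nonneg.2 hc) (inv_nonneg.2 (qnum_succ_pos hq hq1 n).le)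
        · exact inv_qnum_succ_le hq hq1.le n
    _ = c ^ (-x) * (q ^ x) ^ n := by
        rw [Real.mul_rpow (inv_nonneg.2 hc) (by positivity), Real.inv_rpow hc, ← Real.rpow_neg hc,
          ← Real.rpow_natCast, ← Real.rpow_mul hq.le, mul_comm (n : ℝ), Real.rpow_mul hq.le,
          Real.rpow_natCast, mul_comm]

theorem norm_ofReal_mul_qnum_succ_cpow_neg_le {c q : ℝ} (hc : 0 ≤ c) (hq : 0 < q) (hq1 : q < 1)
    {s : ℂ} (hs : 0 < s.re) (n : ℕ) :
    ‖((c * qnum q (n + 1) : ℝ) : ℂ) ^ (-s)‖ ≤ c ^ (-s.re) * (q ^ s.re) ^ n := by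
  rw [Complex.norm_cpow_eq_rpow_re_of_nonneg (mul_nonneg hc (qnum_succ_pos hq hq1 n).le)
    (by simp [hs.ne']), Complex.neg_re]
  exact rpow_neg_mul_qnum_succ_le hc hq hq1 hs.le n

theorem ofReal_pow_cpow {a : ℝ} (ha : 0 ≤ a) (n : ℕ) (s : ℂ) :
    ((a ^ n : ℝ) : ℂ) ^ s = (a : ℂ) ^ ((n : ℂ) * s) := by
  have harg : (a : ℂ).arg = 0 := Complex.arg_ofReal_of_nonneg ha
  rw [Complex.ofReal_pow, Complex.cpow_nat_mul' (by simp [harg, Real.pi_pos])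
    (by simp [harg, Real.pi_pos.le])]

theorem ofReal_mul_qnum_succ_cpow_neg {c q : ℝ} (hc : 0 ≤ c) (hq : 0 < q) (hq1 : q < 1)
    (n : ℕ) (s : ℂ) :
    ((c * qnum q (n + 1) : ℝ) : ℂ) ^ (-s) = (((1 - q ^ 2) / c : ℝ) : ℂ) ^ s *
      ((q : ℂ) ^ ((n : ℂ) * s) / ((1 - q ^ (2 * (n + 1)) : ℝ) : ℂ) ^ s) := by
  have hinv : (c * qnum q (n + 1))⁻¹ = (1 - q ^ 2) / c * q ^ n / (1 - q ^ (2 * (n + 1))) := by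
    rw [mul_inv, qnum_succ_eq hq.ne', inv_div]
    ring
  have hq2 : 0 ≤ 1 - q ^ 2 := by nlinarith
  rw [Complex.cpow_neg, ← Complex.inv_cpow_ofReal_nonneg
    (mul_nonneg hc (qnum_succ_pos hq hq1 n).le), ← Complex.ofReal_inv, hinv,
    Complex.ofReal_div, Complex.div_cpow_ofReal_nonneg (by positivity)
      (sub_nonneg.2 (pow_le_one₀ hq.le hq1.le)),
    Complex.ofReal_mul, Complex.mul_cpow_ofReal_nonneg (by positivity) (by positivity),
    ofReal_pow_cpow hq.le, mul_div_assoc]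

theorem podles_zeta_convergence_general (q : ℝ) (hq : 0 < q) (hq1 : q < 1)
    (w : ℂ) (s : ℂ) (hs : 0 < s.re) :
    Summable (fun n : ℕ =>
      ‖4 * ((n : ℂ) + 1) * ((‖w‖ * qnum q (n + 1) : ℝ) : ℂ) ^ (-s)‖) ∧
    (∑' n : ℕ, 4 * ((n : ℂ) + 1) * ((‖w‖ * qnum q (n + 1) : ℝ) : ℂ) ^ (-s))
      = 4 * (((1 - q ^ 2) / ‖w‖ : ℝ) : ℂ) ^ s *
        ∑' k : ℕ, ((k : ℂ) + 1) * (q : ℂ) ^ ((k : ℂ) * s) /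
          ((1 - q ^ (2 * (k + 1)) : ℝ) : ℂ) ^ s ∧
    ‖∑' n : ℕ, 4 * ((n : ℂ) + 1) * ((‖w‖ * qnum q (n + 1) : ℝ) : ℂ) ^ (-s)‖
      ≤ 4 / (‖w‖ ^ s.re * (1 - q ^ s.re) ^ 2) := by
  set x := s.re
  have hqx : ‖q ^ x‖ < 1 := by
    rw [Real.norm_of_nonneg (by positivity)]
    exact Real.rpow_lt_one hq.le hq1 hs
  have hmajorant : HasSum (fun n : ℕ => 4 * ‖w‖ ^ (-x) * (((n : ℝ) + 1) * (q ^ x) ^ n))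
      (4 * ‖w‖ ^ (-x) * (1 / (1 - q ^ x) ^ 2)) := by
    simpa using (hasSum_choose_mul_geometric_of_norm_lt_one 1 hqx).mul_left (4 * ‖w‖ ^ (-x))
  have hle : ∀ n : ℕ, ‖4 * ((n : ℂ) + 1) * ((‖w‖ * qnum q (n + 1) : ℝ) : ℂ) ^ (-s)‖ ≤
      4 * ‖w‖ ^ (-x) * (((n : ℝ) + 1) * (q ^ x) ^ n) := by
    intro n
    calc _ = 4 * ((n : ℝ) + 1) * ‖((‖w‖ * qnum q (n + 1) : ℝ) : ℂ) ^ (-s)‖ := by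
          rw [norm_mul, norm_mul, Complex.norm_ofNat, ← Nat.cast_succ, Complex.norm_natCast,
            Nat.cast_succ]
      _ ≤ 4 * ((n : ℝ) + 1) * (‖w‖ ^ (-x) * (q ^ x) ^ n) := by
          gcongr
          exact norm_ofReal_mul_qnum_succ_cpow_neg_le (norm_nonneg w) hq hq1 hs n
      _ = _ := by ring
  refine ⟨.of_nonneg_of_le (fun _ => norm_nonneg _) hle hmajorant.summable, ?_,
    (tsum_of_norm_bounded hmajorant hle).trans_eq ?_⟩
  · simp_rw [ofReal_mul_qnum_succ_cpow_neg (norm_nonneg w) hq hq1, mul_assoc, ← tsum_mul_left]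
    congr 1 with n
    ring
  · simp only [Real.rpow_neg (norm_nonneg w), div_eq_mul_inv, mul_inv, one_mul]
    ring

/-- for `Re s > 0`, the series defining the spectral zeta function of the
standard Podleś sphere converges absolutely, equals the rewritten series, and admits the
bound `|ζ_D(s)| ≤ 4/(|w|^x (1-q^x)²)` where `x = Re s`. -/
theorem podles_zeta_convergence (q : ℝ) (hq : 0 < q) (hq1 : q < 1)
    (w : ℂ) (hw : w ≠ 0) (s : ℂ) (hs : 0 < s.re) :
    Summable (fun n : ℕ =>
      ‖4 * ((n : ℂ) + 1) * ((‖w‖ * qnum q (n + 1) : ℝ) : ℂ) ^ (-s)‖) ∧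
    (∑' n : ℕ, 4 * ((n : ℂ) + 1) * ((‖w‖ * qnum q (n + 1) : ℝ) : ℂ) ^ (-s))
      = 4 * (((1 - q ^ 2) / ‖w‖ : ℝ) : ℂ) ^ s *
        ∑' k : ℕ, ((k : ℂ) + 1) * (q : ℂ) ^ ((k : ℂ) * s) /
          ((1 - q ^ (2 * (k + 1)) : ℝ) : ℂ) ^ s ∧
    ‖∑' n : ℕ, 4 * ((n : ℂ) + 1) * ((‖w‖ * qnum q (n + 1) : ℝ) : ℂ) ^ (-s)‖
      ≤ 4 / (‖w‖ ^ s.re * (1 - q ^ s.re) ^ 2) :=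
  podles_zeta_convergence_general q hq hq1 w s hs
end

section
/- Let 0<q<1, w∈ℂ∖{0}, M∈ℕ and δ∈(0,2), and set c(q,δ) := min{(1−q^{2−δ})², (1−q^{−δ})²}. Then for every s∈ℂ with Re(s) = −2M−δ, the meromorphic continuation Z(s) = 4·((1−q²)/|w|)^s · Σ_{n=0}^∞ ((∏_{j=0}^{n-1}(s+j))/n!) · q^{2n}/(1−q^{s+2n})² satisfies |Z(s)| ≤ 4·c(q,δ)^{-1} · ((1−q²)/|w|)^{Re(s)} · (1−q²)^{−|s|}. -/
/-!
Since `‖1 - q^z‖ ≥ |1 - q^{Re z}|` and `Re (s + 2n) = 2(n - M) - δ` never falls in the gap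
`(-δ, 2 - δ)`, every denominator `(1 - q^{s+2n})²` has norm at least `c(q,δ)`. With
`‖∏_{j<n} (s + j)‖ ≤ ∏_{j<n} (‖s‖ + j)`, the series is dominated termwise by `c(q,δ)⁻¹` times the
binomial series `Σ (∏_{j<n} (‖s‖ + j) / n!) q^{2n} = (1 - q²)^{-‖s‖}`.
-/

open Complex Real

/-- The meromorphic continuation
`Z(s) = 4 ((1-q²)/|w|)^s Σ_{n≥0} (∏_{j<n}(s+j)/n!) q^{2n}/(1-q^{s+2n})²`. -/
noncomputable def podlesZetaExt (q : ℝ) (w : ℂ) (s : ℂ) : ℂ :=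
  4 * (((1 - q ^ 2) / ‖w‖ : ℝ) : ℂ) ^ s *
    ∑' n : ℕ, (∏ j ∈ Finset.range n, (s + (j : ℂ))) / (n.factorial : ℂ) *
      ((q : ℂ) ^ (2 * n) / (1 - (q : ℂ) ^ (s + 2 * (n : ℂ))) ^ 2)

open Finset

theorem ascPochhammer_eval_eq_prod_range {R : Type*} [CommSemiring R] (n : ℕ) (r : R) :
    (ascPochhammer R n).eval r = ∏ j ∈ range n, (r + j) := by
  induction n with
  | zero => simp
  | succ n ih => simp [ascPochhammer_succ_right, ih, prod_range_succ]

theorem Ring.choose_add_natCast_sub_one_eq_prod_div_factorial {K : Type*} [Field K] [CharZero K]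
    (a : K) (n : ℕ) : Ring.choose (a + n - 1) n = (∏ j ∈ range n, (a + j)) / n.factorial := by
  rw [← Ring.multichoose_eq, eq_div_iff (Nat.cast_ne_zero.2 n.factorial_ne_zero), mul_comm,
    ← nsmul_eq_mul, Ring.factorial_nsmul_multichoose_eq_ascPochhammer,
    Polynomial.ascPochhammer_smeval_eq_eval, ascPochhammer_eval_eq_prod_range]

theorem Real.hasSum_prod_add_div_factorial_mul_pow (a : ℝ) {x : ℝ} (hx : |x| < 1) :
    HasSum (fun n : ℕ ↦ (∏ j ∈ range n, (a + j)) / n.factorial * x ^ n) ((1 - x) ^ (-a)) := by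
  have h := (Real.one_div_one_sub_rpow_hasFPowerSeriesOnBall_zero a).hasSum (y := x)
    (by simpa [enorm_eq_nnnorm, ← NNReal.coe_lt_coe] using hx)
  simp only [FormalMultilinearSeries.ofScalars_apply_eq, smul_eq_mul, zero_add,
    Ring.choose_add_natCast_sub_one_eq_prod_div_factorial] at h
  rwa [Real.rpow_neg (by linarith [le_abs_self x]), ← one_div]

theorem norm_prod_range_add_natCast_le {𝕜 : Type*} [RCLike 𝕜] (s : 𝕜) (n : ℕ) :
    ‖∏ j ∈ range n, (s + j)‖ ≤ ∏ j ∈ range n, (‖s‖ + j) := by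
  rw [norm_prod]
  gcongr with j
  exact (norm_add_le _ _).trans_eq (by rw [RCLike.norm_natCast])

theorem norm_tsum_prod_add_div_factorial_mul_le {s : ℂ} {u : ℕ → ℂ} {C r : ℝ}
    (hr0 : 0 ≤ r) (hr1 : r < 1) (hu : ∀ n, ‖u n‖ ≤ C * r ^ n) :
    ‖∑' n : ℕ, (∏ j ∈ range n, (s + j)) / n.factorial * u n‖ ≤ C * (1 - r) ^ (-‖s‖) := by
  refine tsum_of_norm_bounded
    ((Real.hasSum_prod_add_div_factorial_mul_pow ‖s‖ (abs_lt.2 ⟨by linarith, hr1⟩)).mul_left C)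
    fun n ↦ ?_
  rw [norm_mul, norm_div, Complex.norm_natCast]
  calc ‖∏ j ∈ range n, (s + j)‖ / n.factorial * ‖u n‖
      ≤ (∏ j ∈ range n, (‖s‖ + j)) / n.factorial * (C * r ^ n) := by
        gcongr
        exacts [norm_prod_range_add_natCast_le s n, hu n]
    _ = C * ((∏ j ∈ range n, (‖s‖ + j)) / n.factorial * r ^ n) := by ring

theorem abs_one_sub_rpow_re_le_norm_one_sub_cpow {q : ℝ} (hq : 0 < q) (z : ℂ) :
    |1 - q ^ z.re| ≤ ‖1 - (q : ℂ) ^ z‖ := by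
  simpa [Complex.norm_cpow_eq_rpow_re_of_pos hq] using abs_norm_sub_norm_le (1 : ℂ) ((q : ℂ) ^ z)

theorem min_sq_one_sub_rpow_le {q a b t : ℝ} (hq : 0 < q) (hq1 : q ≤ 1) (ha : a ≤ 0) (hb : 0 ≤ b)
    (ht : t ≤ a ∨ b ≤ t) : min ((1 - q ^ b) ^ 2) ((1 - q ^ a) ^ 2) ≤ (1 - q ^ t) ^ 2 := by
  rcases ht with ht | ht
  · have h1 : 1 ≤ q ^ a := Real.one_le_rpow_of_pos_of_le_one_of_nonpos hq hq1 ha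
    have hat : q ^ a ≤ q ^ t := Real.rpow_le_rpow_of_exponent_ge hq hq1 ht
    exact min_le_of_right_le (by nlinarith)
  · have h1 : q ^ b ≤ 1 := Real.rpow_le_one hq.le hq1 hb
    have htb : q ^ t ≤ q ^ b := Real.rpow_le_rpow_of_exponent_ge hq hq1 ht
    exact min_le_of_left_le (by nlinarith)

theorem min_sq_one_sub_rpow_pos {q a b : ℝ} (hq : 0 < q) (hq1 : q < 1) (ha : a < 0) (hb : 0 < b) :
    0 < min ((1 - q ^ b) ^ 2) ((1 - q ^ a) ^ 2) := by
  have h1 : 1 < q ^ a := Real.one_lt_rpow_of_pos_of_lt_one_of_neg hq hq1 ha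
  have h2 : q ^ b < 1 := Real.rpow_lt_one hq.le hq1 hb
  exact lt_min (by nlinarith) (by nlinarith)

theorem min_sq_le_norm_one_sub_cpow_sq {q δ : ℝ} (hq : 0 < q) (hq1 : q ≤ 1) (hδ0 : 0 ≤ δ)
    (hδ2 : δ ≤ 2) {M : ℕ} {s : ℂ} (hs : s.re = -(2 * M) - δ) (n : ℕ) :
    min ((1 - q ^ (2 - δ)) ^ 2) ((1 - q ^ (-δ)) ^ 2) ≤ ‖(1 - (q : ℂ) ^ (s + 2 * n)) ^ 2‖ := by
  have hre : (s + 2 * n).re = 2 * ((n : ℝ) - M) - δ := by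
    simp only [add_re, hs, mul_re, re_ofNat, natCast_re, im_ofNat, natCast_im, mul_zero, sub_zero]
    ring
  have hlattice : (s + 2 * n).re ≤ -δ ∨ 2 - δ ≤ (s + 2 * n).re := by
    rcases le_or_gt n M with h | h
    · have h' : (n : ℝ) ≤ M := by exact_mod_cast h
      left; rw [hre]; linarith
    · have h' : (M : ℝ) + 1 ≤ n := by exact_mod_cast h
      right; rw [hre]; linarith
  calc _ ≤ (1 - q ^ (s + 2 * n).re) ^ 2 :=
        min_sq_one_sub_rpow_le hq hq1 (by linarith) (by linarith) hlattice
    _ = |1 - q ^ (s + 2 * n).re| ^ 2 := (sq_abs _).symm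
    _ ≤ ‖(1 - (q : ℂ) ^ (s + 2 * n)) ^ 2‖ := by
        rw [norm_pow]
        gcongr
        exact abs_one_sub_rpow_re_le_norm_one_sub_cpow hq _

theorem podles_zeta_vertical_bound_general (q : ℝ) (hq : 0 < q) (hq1 : q < 1)
    (w : ℂ) (M : ℕ) (δ : ℝ) (hδ0 : 0 < δ) (hδ2 : δ < 2) :
    ∀ s : ℂ, s.re = -(2 * M) - δ →
      ‖podlesZetaExt q w s‖
        ≤ 4 * (min ((1 - q ^ (2 - δ)) ^ 2) ((1 - q ^ (-δ)) ^ 2))⁻¹ *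
          ((1 - q ^ 2) / ‖w‖) ^ s.re * (1 - q ^ 2) ^ (-‖s‖) := by
  intro s hs
  set c := min ((1 - q ^ (2 - δ)) ^ 2) ((1 - q ^ (-δ)) ^ 2)
  have hc : 0 < c := min_sq_one_sub_rpow_pos hq hq1 (by linarith) (by linarith)
  have hterm (n : ℕ) : ‖(q : ℂ) ^ (2 * n) / (1 - (q : ℂ) ^ (s + 2 * (n : ℂ))) ^ 2‖
      ≤ c⁻¹ * (q ^ 2) ^ n := by
    rw [norm_div, norm_pow (q : ℂ), Complex.norm_real, Real.norm_of_nonneg hq.le, ← pow_mul,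
      div_eq_mul_inv, mul_comm]
    exact mul_le_mul_of_nonneg_right
      (inv_anti₀ hc (min_sq_le_norm_one_sub_cpow_sq hq hq1.le hδ0.le hδ2.le hs n)) (by positivity)
  have hre : s.re ≠ 0 := by rw [hs]; linarith
  have hq2 : q ^ 2 < 1 := by nlinarith
  rw [podlesZetaExt, norm_mul, norm_mul,
    Complex.norm_cpow_eq_rpow_re_of_nonneg (div_nonneg (by linarith) (norm_nonneg w)) hre]
  calc ‖(4 : ℂ)‖ * ((1 - q ^ 2) / ‖w‖) ^ s.re * ‖∑' n : ℕ, _‖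
      ≤ 4 * ((1 - q ^ 2) / ‖w‖) ^ s.re * (c⁻¹ * (1 - q ^ 2) ^ (-‖s‖)) := by
        rw [Complex.norm_ofNat]
        gcongr
        exact norm_tsum_prod_add_div_factorial_mul_le (by positivity) hq2 hterm
    _ = 4 * c⁻¹ * ((1 - q ^ 2) / ‖w‖) ^ s.re * (1 - q ^ 2) ^ (-‖s‖) := by ring

/-- on the vertical line `Re s = -2M - δ` (with `M ∈ ℕ`, `δ ∈ (0,2)`),
setting `c(q,δ) = min{(1-q^{2-δ})², (1-q^{-δ})²}`, one has
`|Z(s)| ≤ 4 c(q,δ)⁻¹ ((1-q²)/|w|)^{Re s} (1-q²)^{-|s|}`. -/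
theorem podles_zeta_vertical_bound (q : ℝ) (hq : 0 < q) (hq1 : q < 1)
    (w : ℂ) (hw : w ≠ 0) (M : ℕ) (δ : ℝ) (hδ0 : 0 < δ) (hδ2 : δ < 2) :
    ∀ s : ℂ, s.re = -(2 * M) - δ →
      ‖podlesZetaExt q w s‖
        ≤ 4 * (min ((1 - q ^ (2 - δ)) ^ 2) ((1 - q ^ (-δ)) ^ 2))⁻¹ *
          ((1 - q ^ 2) / ‖w‖) ^ s.re * (1 - q ^ 2) ^ (-‖s‖) :=
  podles_zeta_vertical_bound_general q hq hq1 w M δ hδ0 hδ2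
end

section
/- For every η>0, one has arctan(η) > e^{−1−4π/η}·√(1 + 4/η²); that is, the function F(η) := arctan(η) − e^{−1−4π/η}·√(1+4/η²) is strictly positive on (0,∞). -/
/-!
Bound `√(1 + 4/η²) ≤ 1 + 2/η ≤ e^{2/η}`, so the left-hand side is at most `e^{-1 - c/η}` with
`c = 4π - 2 > 4`. For `η ≥ 1` this is below `e^{-1} < 1/2 < π/4 ≤ arctan η`; for `η ≤ 1` it is
below `e^{-c/η} < η/c < η/4`, and `η/4 ≤ arctan η` because `tan (η/4) ≤ η`.
-/

open Real

namespace Real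

lemma sqrt_one_add_sq_le_exp {x : ℝ} (hx : 0 ≤ x) : √(1 + x ^ 2) ≤ exp x :=
  calc √(1 + x ^ 2) ≤ 1 + x := sqrt_le_iff.mpr ⟨by linarith, by nlinarith⟩
    _ ≤ exp x := by linarith [add_one_le_exp x]

lemma exp_neg_lt_inv {t : ℝ} (ht : 0 < t) : exp (-t) < t⁻¹ := by
  rw [exp_neg]
  exact inv_strictAnti₀ ht (by linarith [add_one_lt_exp ht.ne'])

lemma tan_div_four_le {x : ℝ} (hx₀ : 0 ≤ x) (hx₁ : x ≤ 1) : tan (x / 4) ≤ x := by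
  have hcos : 1 / 4 < cos (x / 4) := by nlinarith [one_sub_sq_div_two_le_cos (x := x / 4)]
  rw [tan_eq_sin_div_cos, div_le_iff₀ (by linarith)]
  nlinarith [sin_le (x := x / 4) (by positivity)]

lemma div_four_le_arctan {x : ℝ} (hx₀ : 0 ≤ x) (hx₁ : x ≤ 1) : x / 4 ≤ arctan x := by
  have hπ := pi_gt_three
  rw [← arctan_tan (x := x / 4) (by linarith) (by linarith)]
  exact arctan_strictMono.monotone (tan_div_four_le hx₀ hx₁)

lemma pi_div_four_le_arctan {x : ℝ} (hx : 1 ≤ x) : π / 4 ≤ arctan x := by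
  rw [← arctan_one]
  exact arctan_strictMono.monotone hx

lemma exp_neg_one_sub_div_lt_arctan {c x : ℝ} (hc : 4 ≤ c) (hx : 0 < x) :
    exp (-1 - c / x) < arctan x := by
  have hcx : 0 < c / x := by positivity
  rcases le_total x 1 with hx₁ | hx₁
  · calc exp (-1 - c / x) ≤ exp (-(c / x)) := exp_le_exp.mpr (by linarith)
      _ < (c / x)⁻¹ := exp_neg_lt_inv hcx
      _ ≤ x / 4 := by rw [inv_div]; gcongr
      _ ≤ arctan x := div_four_le_arctan hx.le hx₁
  · calc exp (-1 - c / x) ≤ exp (-1) := exp_le_exp.mpr (by linarith)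
      _ < 1 / 2 := exp_neg_one_lt_half
      _ < π / 4 := by linarith [pi_gt_three]
      _ ≤ arctan x := pi_div_four_le_arctan hx₁

end Real

/-- for every `η > 0`,
`arctan η > e^{-1-4π/η} √(1 + 4/η²)`, i.e. `F(η) := arctan η − e^{-1-4π/η}√(1+4/η²) > 0`. -/
theorem arctan_exp_inequality (η : ℝ) (hη : 0 < η) :
    Real.exp (-1 - 4 * Real.pi / η) * Real.sqrt (1 + 4 / η ^ 2) < Real.arctan η := by
  have hsqrt : √(1 + 4 / η ^ 2) ≤ exp (2 / η) := by
    simpa [div_pow, show (2 : ℝ) ^ 2 = 4 by norm_num] using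
      sqrt_one_add_sq_le_exp (x := 2 / η) (by positivity)
  calc exp (-1 - 4 * π / η) * √(1 + 4 / η ^ 2) ≤ exp (-1 - 4 * π / η) * exp (2 / η) := by
        gcongr
    _ = exp (-1 - (4 * π - 2) / η) := by rw [← exp_add]; ring_nf
    _ < arctan η := exp_neg_one_sub_div_lt_arctan (by linarith [pi_gt_three]) hη
end

section
/- For every n∈ℕ and every ν∈ℂ, the power series Σ_{k=0}^∞ ((−1)^k/k!) · c_{k} · ξ^{k}, where c_k is the n-th derivative at α=0 of the entire function α ↦ 1/Γ(k+α+ν+1), converges absolutely for every ξ∈ℂ; consequently the function J̃^{(n)}_ν(z) := Σ_{k=0}^∞ ((−1)^k/k!)·(z/2)^{2k+ν} · (∂ⁿ/∂αⁿ)[1/Γ(k+α+ν+1)]|_{α=0} is well defined (the series over k has infinite radius of convergence in the variable (z/2)²). -/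
/-!
By Cauchy's estimate on unit circles, the `k`-th coefficient is bounded by `n!` times the
supremum of `‖1/Γ‖` on a horizontal half-strip containing all the points `k + ν + 1`. That
supremum is finite: `1/Γ` is bounded on a compact box, and `1/Γ(w + 1) = w⁻¹ · 1/Γ(w)` with
`‖w‖ ≥ 1` carries the bound to the right. The series is thus dominated by
`C · Σ ‖ξ‖ᵏ / k!`.
-/

namespace Complex

theorem norm_inv_Gamma_add_one_le {w : ℂ} (hw : 1 ≤ ‖w‖) :
    ‖(Gamma (w + 1))⁻¹‖ ≤ ‖(Gamma w)⁻¹‖ := by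
  have hw0 : w ≠ 0 := norm_pos_iff.mp (zero_lt_one.trans_le hw)
  rw [Gamma_add_one w hw0, mul_inv, norm_mul, norm_inv]
  exact mul_le_of_le_one_left (norm_nonneg _) (inv_le_one_of_one_le₀ hw)

-- `1/Γ` grows exponentially along vertical lines, so the strip cannot be widened to a half-plane.
theorem exists_bound_inv_Gamma_halfStrip (a b : ℝ) :
    ∃ C, ∀ w : ℂ, a ≤ w.re → |w.im| ≤ b → ‖(Gamma w)⁻¹‖ ≤ C := by
  set a' := max a 1 + 1
  obtain ⟨C, hC⟩ := (isCompact_Icc (a := a) (b := a')).reProdIm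
    (isCompact_Icc (a := -b) (b := b)) |>.exists_bound_of_continuousOn
      differentiable_one_div_Gamma.continuous.continuousOn
  have bound : ∀ m : ℕ, ∀ w : ℂ, a ≤ w.re → w.re ≤ a' + m → |w.im| ≤ b →
      ‖(Gamma w)⁻¹‖ ≤ C := by
    intro m
    induction m with
    | zero =>
      intro w ha ha' hb
      exact hC w ⟨⟨ha, by simpa using ha'⟩, abs_le.mp hb⟩
    | succ m ih =>
      intro w ha ha' hb
      by_cases hw : w.re ≤ a' + m
      · exact ih w ha hw hb
      have hre_le : (w - 1).re ≤ a' + m := by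
        simp only [sub_re, one_re]; push_cast at ha'; linarith
      have hre : max a 1 ≤ (w - 1).re := by simp only [sub_re, one_re]; linarith
      calc ‖(Gamma w)⁻¹‖ = ‖(Gamma (w - 1 + 1))⁻¹‖ := by rw [sub_add_cancel]
        _ ≤ ‖(Gamma (w - 1))⁻¹‖ :=
          norm_inv_Gamma_add_one_le <| ((le_max_right _ _).trans hre).trans (re_le_norm _)
        _ ≤ C := ih _ ((le_max_left _ _).trans hre) hre_le (by simpa using hb)
  refine ⟨C, fun w ha hb => bound ⌈w.re⌉₊ w ha ?_ hb⟩
  have := Nat.le_ceil w.re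
  have : 0 ≤ a' := by positivity
  linarith

theorem exists_bound_iteratedDeriv_inv_Gamma_halfStrip (n : ℕ) (a b : ℝ) :
    ∃ C, ∀ z : ℂ, a ≤ z.re → |z.im| ≤ b →
      ‖iteratedDeriv n (fun w => (Gamma w)⁻¹) z‖ ≤ C := by
  obtain ⟨C, hC⟩ := exists_bound_inv_Gamma_halfStrip (a - 1) (b + 1)
  refine ⟨n.factorial * C, fun z ha hb => ?_⟩
  have hsphere : ∀ w ∈ Metric.sphere z 1, ‖(Gamma w)⁻¹‖ ≤ C := by
    intro w hw
    have hdist : ‖w - z‖ = 1 := mem_sphere_iff_norm.mp hw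
    have hre := abs_re_le_norm (w - z)
    have him := abs_im_le_norm (w - z)
    simp only [sub_re, sub_im, hdist] at hre him
    exact hC w (by linarith [abs_le.mp hre]) (by linarith [abs_sub_abs_le_abs_sub w.im z.im])
  simpa using norm_iteratedDeriv_le_of_forall_mem_sphere_norm_le n one_pos
    differentiable_one_div_Gamma.diffContOnCl hsphere

end Complex

open Complex

/-- for every `n ∈ ℕ` and `ν ∈ ℂ`, the power series
`Σ_k ((-1)^k/k!) · (∂ⁿ/∂αⁿ)[1/Γ(k+α+ν+1)]|_{α=0} · ξ^k` converges absolutely for every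
`ξ ∈ ℂ` (infinite radius of convergence), so that the functions `J̃^{(n)}_ν` are well
defined. -/
theorem besselJt_series_entire (n : ℕ) (ν : ℂ) (ξ : ℂ) :
    Summable (fun k : ℕ =>
      ‖((-1 : ℂ) ^ k / (k.factorial : ℂ)) *
        iteratedDeriv n (fun α : ℂ => 1 / Complex.Gamma ((k : ℂ) + α + ν + 1)) 0 *
        ξ ^ k‖) := by
  obtain ⟨C, hC⟩ := exists_bound_iteratedDeriv_inv_Gamma_halfStrip n (ν.re + 1) |ν.im|
  have hcoeff (k : ℕ) :
      ‖iteratedDeriv n (fun α : ℂ => 1 / Gamma ((k : ℂ) + α + ν + 1)) 0‖ ≤ C := by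
    have hshift : (fun α : ℂ => 1 / Gamma ((k : ℂ) + α + ν + 1)) =
        fun α => (Gamma ((k + ν + 1) + α))⁻¹ := by
      funext α; rw [one_div]; ring_nf
    rw [hshift, iteratedDeriv_comp_const_add n (fun w => (Gamma w)⁻¹)]
    simp only [add_zero]
    exact hC _ (by simp) (by simp)
  refine (Real.summable_pow_div_factorial ‖ξ‖).mul_right C |>.of_nonneg_of_le
    (fun k => norm_nonneg _) fun k => ?_
  rw [norm_mul, norm_mul, norm_div, norm_pow, norm_pow, norm_neg, norm_one, one_pow,
    Complex.norm_natCast]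
  calc _ = ‖ξ‖ ^ k / k.factorial *
        ‖iteratedDeriv n (fun α : ℂ => 1 / Gamma ((k : ℂ) + α + ν + 1)) 0‖ := by ring
    _ ≤ ‖ξ‖ ^ k / k.factorial * C := by gcongr; exact hcoeff k
end

section
/- The reciprocal Gamma function satisfies: the first derivative of α ↦ 1/Γ(α+1) at α=0 equals the Euler–Mascheroni constant γ, and the second derivative of α ↦ 1/Γ(α+1) at α=0 equals γ² − π²/6. Equivalently, the functions J̃^{(1)}_0 and J̃^{(2)}_0 are regular at the origin with J̃^{(1)}_0(0) = γ and J̃^{(2)}_0(0) = γ² − π²/6. -/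
/-!
With `f s = 1 / Γ(s + 1)`, the reflection formula `Γ(1 + s) Γ(1 - s) = π s / sin (π s)` reads
`π s · f(s) f(-s) = sin (π s)`. Differentiating three times at `0` (Leibniz rule) gives
`3π · (2 f''(0) - 2 f'(0)²) = -π³`, and `f'(0) = -Γ'(1) = γ`, so `f''(0) = γ² - π²/6`.
-/

open Complex Real

section LeibnizAtZero

variable {𝕜 : Type*} [NontriviallyNormedField 𝕜]

theorem iteratedDeriv_succ_fun_id_mul_zero {n : ℕ} {g : 𝕜 → 𝕜}
    (hg : ContDiffAt 𝕜 ↑(n + 1) g 0) :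
    iteratedDeriv (n + 1) (fun x => x * g x) 0 = (n + 1) * iteratedDeriv n g 0 := by
  rw [iteratedDeriv_fun_mul contDiffAt_fun_id hg, Finset.sum_eq_single 1]
  · simp [iteratedDeriv_fun_id_zero]
  · intro i _ hi
    simp [iteratedDeriv_fun_id_zero, hi]
  · simp

theorem iteratedDeriv_two_fun_mul_comp_neg_zero {f : 𝕜 → 𝕜} (hf : ContDiffAt 𝕜 2 f 0) :
    iteratedDeriv 2 (fun x => f x * f (-x)) 0
      = 2 * (f 0 * iteratedDeriv 2 f 0 - deriv f 0 ^ 2) := by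
  have hf_neg : ContDiffAt 𝕜 2 (fun x => f (-x)) 0 :=
    (by simpa using hf : ContDiffAt 𝕜 2 f (-0)).comp 0 contDiff_neg.contDiffAt
  rw [iteratedDeriv_fun_mul hf hf_neg]
  simp only [Nat.reduceAdd, iteratedDeriv_comp_neg, neg_zero, smul_eq_mul, Finset.sum_range_succ,
    Finset.range_one, Finset.sum_singleton, Nat.choose_zero_right, Nat.cast_one,
    iteratedDeriv_zero, one_mul, tsub_zero, even_two, Even.neg_pow, one_pow,
    Nat.choose_succ_self_right, Nat.cast_ofNat, iteratedDeriv_one, Nat.add_one_sub_one, pow_one,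
    neg_mul, mul_neg, Nat.choose_self, tsub_self, pow_zero]
  ring

end LeibnizAtZero

namespace Complex

theorem iteratedDeriv_three_sin_const_mul_zero (c : ℂ) :
    iteratedDeriv 3 (fun x => sin (c * x)) 0 = -c ^ 3 := by
  rw [iteratedDeriv_comp_const_mul contDiff_sin, iteratedDeriv_odd_sin 1]
  simp

theorem hasDerivAt_inv_Gamma_one :
    HasDerivAt (fun s => (Gamma s)⁻¹) (eulerMascheroniConstant : ℂ) 1 := by
  simpa [Gamma_one] using hasDerivAt_Gamma_one.fun_inv (by simp [Gamma_one])

-- Both sides vanish at the nonzero integers, where `Gamma_mul_Gamma_one_sub` divides by zero.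
theorem sin_pi_mul_eq_pi_mul_div_Gamma_one_add_mul_Gamma_one_sub (s : ℂ) :
    sin (π * s) = π * s / (Gamma (1 + s) * Gamma (1 - s)) := by
  rcases eq_or_ne s 0 with rfl | hs
  · simp
  rw [add_comm, Gamma_add_one s hs, mul_assoc, Gamma_mul_Gamma_one_sub]
  rcases eq_or_ne (sin (π * s)) 0 with h | h
  · simp [h]
  · field_simp

end Complex

/-- the first derivative of `α ↦ 1/Γ(α+1)` at `α = 0` equals the
Euler–Mascheroni constant `γ`, and its second derivative at `α = 0` equals `γ² − π²/6`.
Equivalently, `J̃^{(1)}_0(0) = γ` and `J̃^{(2)}_0(0) = γ² − π²/6`. -/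
theorem reciprocal_gamma_derivs_at_zero :
    deriv (fun α : ℂ => 1 / Complex.Gamma (α + 1)) 0
      = (Real.eulerMascheroniConstant : ℂ) ∧
    iteratedDeriv 2 (fun α : ℂ => 1 / Complex.Gamma (α + 1)) 0
      = (Real.eulerMascheroniConstant : ℂ) ^ 2 - (Real.pi : ℂ) ^ 2 / 6 := by
  simp only [one_div]
  set f : ℂ → ℂ := fun α => (Complex.Gamma (α + 1))⁻¹
  have hf {n : WithTop ℕ∞} : ContDiff ℂ n f :=
    (differentiable_one_div_Gamma.comp (differentiable_id.add_const 1)).contDiff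
  have hf_zero : f 0 = 1 := by simp [f, Complex.Gamma_one]
  have hf_deriv : deriv f 0 = eulerMascheroniConstant :=
    (HasDerivAt.comp_add_const (0 : ℂ) 1 (by rw [zero_add]; exact hasDerivAt_inv_Gamma_one)).deriv
  have h_reflection : (fun x => π * (x * (f x * f (-x)))) = fun x => Complex.sin (π * x) := by
    funext x
    rw [sin_pi_mul_eq_pi_mul_div_Gamma_one_add_mul_Gamma_one_sub]
    simp only [f]
    ring_nf
  have h3 := congrArg (fun g => iteratedDeriv 3 g 0) h_reflection
  simp only [iteratedDeriv_const_mul_field] at h3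
  rw [iteratedDeriv_succ_fun_id_mul_zero (by fun_prop),
    iteratedDeriv_two_fun_mul_comp_neg_zero hf.contDiffAt,
    iteratedDeriv_three_sin_const_mul_zero, hf_zero, hf_deriv] at h3
  refine ⟨hf_deriv, ?_⟩
  have h6π : (6 * π : ℂ) ≠ 0 := mul_ne_zero (by norm_num) (ofReal_ne_zero.mpr pi_ne_zero)
  apply mul_left_cancel₀ h6π
  linear_combination h3
end

section
/- Let w∈ℂ∖{0} and t>0. Then lim_{q→1⁻} 4·Σ_{n=1}^∞ n·e^{−t|w|[n]_q} = 4·Σ_{n=1}^∞ n·e^{−t|w|n}; that is, as q increases to 1, the heat trace of the Podleś-sphere Dirac operator converges to the heat trace of the (scaled) Dirac operator on the round 2-sphere. -/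
/-! Since `[n]_q = ∑_{k<n} q^(n-1-2k)` is a Laurent polynomial in `q`, it tends to `n` as `q → 1`;
pairing the terms `k` and `n-1-k` and using `q^m + q^(-m) ≥ 2` gives `[n]_q ≥ n`. Hence the
summable classical series `∑ n e^{-t|w|n}` dominates the `q`-series termwise, and Tannery's
theorem (dominated convergence for series) lets the limit pass through the sum. -/

open Complex Real Filter

open Finset

theorem qnum_eq_sum_zpow {q : ℝ} (hq₀ : q ≠ 0) (hq₁ : q ^ 2 ≠ 1) (n : ℕ) :
    qnum q n = ∑ k ∈ range n, q ^ ((n : ℤ) - 1 - 2 * k) := by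
  have hden : q ^ (-1 : ℤ) - q ≠ 0 := by
    rw [zpow_neg_one, sub_ne_zero]
    intro h
    apply hq₁
    field_simp at h
    linarith
  rw [qnum, div_eq_iff hden, sum_mul]
  have hterm : ∀ k : ℕ, q ^ ((n : ℤ) - 1 - 2 * k) * (q ^ (-1 : ℤ) - q) =
      q ^ ((n : ℤ) - 2 * ↑(k + 1)) - q ^ ((n : ℤ) - 2 * k) := by
    intro k
    rw [mul_sub, ← zpow_add₀ hq₀, mul_comm _ q, ← zpow_one_add₀ hq₀]
    push_cast
    ring_nf
  simp only [hterm, sum_range_sub (fun k : ℕ => q ^ ((n : ℤ) - 2 * k))]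
  push_cast
  ring_nf

theorem two_le_zpow_add_zpow_neg {q : ℝ} (hq : 0 < q) (m : ℤ) : 2 ≤ q ^ m + q ^ (-m) := by
  have hx : 0 < q ^ m := zpow_pos hq m
  rw [zpow_neg]
  have : 0 ≤ (q ^ m - 1) ^ 2 / q ^ m := by positivity
  have h : (q ^ m - 1) ^ 2 / q ^ m = q ^ m + (q ^ m)⁻¹ - 2 := by field_simp; ring
  linarith

theorem natCast_le_qnum {q : ℝ} (hq₀ : 0 < q) (hq₁ : q ≠ 1) (n : ℕ) : (n : ℝ) ≤ qnum q n := by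
  have hq₂ : q ^ 2 ≠ 1 := by
    rwa [Ne, pow_eq_one_iff_of_nonneg hq₀.le two_ne_zero]
  rw [qnum_eq_sum_zpow hq₀.ne' hq₂]
  set e : ℕ → ℤ := fun k => (n : ℤ) - 1 - 2 * k
  have hreflect : ∑ k ∈ range n, q ^ (-e k) = ∑ k ∈ range n, q ^ e k := by
    rw [← sum_range_reflect (fun k => q ^ e k)]
    refine sum_congr rfl fun k hk => ?_
    have hcast : ((n - 1 - k : ℕ) : ℤ) = n - 1 - k := by have := mem_range.mp hk; omega
    simp only [e, hcast]
    ring_nf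
  have hsum : 2 * (n : ℝ) ≤ ∑ k ∈ range n, (q ^ e k + q ^ (-e k)) := by
    simpa [mul_comm] using card_nsmul_le_sum (range n) _ 2
      fun k _ => two_le_zpow_add_zpow_neg hq₀ (e k)
  rw [sum_add_distrib, hreflect] at hsum
  linarith

theorem tendsto_qnum_nhdsNE_one (n : ℕ) : Tendsto (qnum · n) (nhdsWithin 1 {1}ᶜ) (nhds n) := by
  have hcont : ContinuousAt (fun q : ℝ => ∑ k ∈ range n, q ^ ((n : ℤ) - 1 - 2 * k)) 1 := by
    fun_prop (disch := norm_num)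
  have hlim := hcont.tendsto.mono_left (nhdsWithin_le_nhds (s := {1}ᶜ))
  simp only [one_zpow, sum_const, card_range, nsmul_eq_mul, mul_one] at hlim
  refine hlim.congr' ?_
  filter_upwards [self_mem_nhdsWithin, nhdsWithin_le_nhds (Ioi_mem_nhds one_pos)] with q hq₁ hq₀
  have hq₂ : q ^ 2 ≠ 1 := by
    rwa [Ne, pow_eq_one_iff_of_nonneg (le_of_lt hq₀) two_ne_zero]
  exact (qnum_eq_sum_zpow (ne_of_gt hq₀) hq₂ n).symm

theorem tendsto_tsum_mul_exp_neg_of_le {α : Type*} {l : Filter α} {m : ℕ → ℝ} (hm : 0 ≤ m)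
    {Λ : α → ℕ → ℝ} {μ : ℕ → ℝ} (hlim : ∀ n, Tendsto (Λ · n) l (nhds (μ n)))
    (hle : ∀ᶠ a in l, ∀ n, μ n ≤ Λ a n) (hsum : Summable fun n => m n * Real.exp (-μ n)) :
    Tendsto (fun a => ∑' n, m n * Real.exp (-Λ a n)) l (nhds (∑' n, m n * Real.exp (-μ n))) := by
  refine tendsto_tsum_of_dominated_convergence hsum
    (fun n => (hlim n).neg.rexp.const_mul (m n)) ?_
  filter_upwards [hle] with a ha n
  rw [norm_of_nonneg (mul_nonneg (hm n) (Real.exp_nonneg _))]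
  exact mul_le_mul_of_nonneg_left (Real.exp_le_exp.mpr (neg_le_neg (ha n))) (hm n)

theorem summable_succ_mul_exp_neg {r : ℝ} (hr : 0 < r) :
    Summable fun n : ℕ => ((n : ℝ) + 1) * Real.exp (-(r * ((n : ℝ) + 1))) := by
  refine ((summable_nat_add_iff 1).mpr (Real.summable_pow_mul_exp_neg_nat_mul 1 hr)).congr
    fun n => ?_
  push_cast
  ring_nf

/-- as `q → 1⁻`, the Podleś-sphere heat trace converges to the classical
heat trace of the (scaled) Dirac operator on the round 2-sphere. -/
theorem heatTrace_q_to_one (w : ℂ) (hw : w ≠ 0) (t : ℝ) (ht : 0 < t) :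
    Filter.Tendsto
      (fun q : ℝ => 4 * ∑' n : ℕ, ((n : ℝ) + 1) *
        Real.exp (-(t * (‖w‖ * qnum q (n + 1)))))
      (nhdsWithin 1 (Set.Ioo (0 : ℝ) 1))
      (nhds (4 * ∑' n : ℕ, ((n : ℝ) + 1) *
        Real.exp (-(t * (‖w‖ * ((n : ℝ) + 1)))))) := by
  have hc : 0 < t * ‖w‖ := mul_pos ht (norm_pos_iff.mpr hw)
  have hfilter : nhdsWithin (1 : ℝ) (Set.Ioo 0 1) ≤ nhdsWithin 1 {1}ᶜ :=
    nhdsWithin_mono _ fun q hq => ne_of_lt hq.2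
  refine Tendsto.const_mul 4 (tendsto_tsum_mul_exp_neg_of_le (fun n => by positivity) ?_ ?_ ?_)
  · intro n
    have hq := (tendsto_qnum_nhdsNE_one (n + 1)).mono_left hfilter
    push_cast at hq
    exact (hq.const_mul ‖w‖).const_mul t
  · filter_upwards [self_mem_nhdsWithin] with q hq n
    have := natCast_le_qnum hq.1 (ne_of_lt hq.2) (n + 1)
    push_cast at this
    gcongr
  · simpa only [mul_assoc] using summable_succ_mul_exp_neg hc
end
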